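/- For every connection form ω there exists a unique pair (ωˢ, S) such that ω = ωˢ + S, where ωˢ is a semi-teleparallel connection form with respect to {v, b₁, b₂, b₃} and S : V → End(V) is linear with each S(u) η-skew and with vanishing spatial part in the triad directions, i.e. h ∘ S(bᵢ) ∘ h = 0 for i = 1,2,3. -/

import Mathlib

open Finset

/- Minkowski space V = ℝ⁴ with bilinear form η. -/
abbrev V4 := Fin 4 → ℝ

def eta (x y : V4) : ℝ := -(x 0 * y 0) + x 1 * y 1 + x 2 * y 2 + x 3 * y 3

/-- `f : V → V` is linear. -/
def IsLin (f : V4 → V4) : Prop :=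
  (∀ x y, f (x + y) = f x + f y) ∧ ∀ (c : ℝ) (x : V4), f (c • x) = c • f x

/-- `f` is η-skew: η(f x, y) = −η(x, f y). -/
def IsSkew (f : V4 → V4) : Prop := ∀ x y, eta (f x) y = - eta x (f y)

/-- A connection form: a linear map `ω : V → End V` with each `ω u` η-skew. -/
def ConnForm (ω : V4 → V4 → V4) : Prop :=
  (∀ u u', ω (u + u') = ω u + ω u') ∧ (∀ (c : ℝ) (u : V4), ω (c • u) = c • ω u) ∧
  (∀ u, IsLin (ω u)) ∧ (∀ u, IsSkew (ω u))

/-- `ω` is semi-teleparallel w.r.t. `{v, b₁, b₂, b₃}`: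
`dv(u) + ω(u)v = 0` for all `u` and `dbᵢ(v) + ω(v)bᵢ = 0`. -/
def SemiTeleparallel (v : V4) (dv : V4 → V4) (b : Fin 3 → V4) (db : Fin 3 → V4 → V4)
    (ω : V4 → V4 → V4) : Prop :=
  (∀ u, dv u + ω u v = 0) ∧ ∀ i, db i v + ω v (b i) = 0

/-- Projection onto the η-orthogonal complement of `v`:  h(x) = x + η(v,x)·v. -/
def proj (v : V4) (x : V4) : V4 := x + eta v x • v

/-- The pair `(ωˢ, S)` decomposes `ω`: `ωˢ` is a semi-teleparallel connection form,
`S : V → End V` is linear, each `S u` is η-skew, `h ∘ S(bᵢ) ∘ h = 0`, and `ω = ωˢ + S`. -/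
def GoodPairS (v : V4) (dv : V4 → V4) (b : Fin 3 → V4) (db : Fin 3 → V4 → V4)
    (ω : V4 → V4 → V4) (p : (V4 → V4 → V4) × (V4 → V4 → V4)) : Prop :=
  ConnForm p.1 ∧ SemiTeleparallel v dv b db p.1 ∧
  (∀ u u', p.2 (u + u') = p.2 u + p.2 u') ∧
  (∀ (c : ℝ) (u : V4), p.2 (c • u) = c • p.2 u) ∧
  (∀ u, IsLin (p.2 u)) ∧ (∀ u, IsSkew (p.2 u)) ∧
  (∀ i, ∀ x, proj v (p.2 (b i) (proj v x)) = 0) ∧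
  (∀ u x, ω u x = p.1 u x + p.2 u x)



/-
Work in the orthonormal frame `(v, b₁, b₂, b₃)`: every linear map is determined by its values on
the frame, and η-skewness can be checked on pairs of frame vectors. Semi-teleparallelism prescribes
`ωˢ(v)` completely (`v ↦ -dv(v)`, `bᵢ ↦ -dbᵢ(v)`; the compatibility conditions on `dv, dbᵢ` are
exactly what makes this η-skew) and prescribes `ωˢ(bᵢ)v = -dv(bᵢ)`, hence by skewness also the
time component `η(v, ωˢ(bᵢ)x)`. The condition `h S(bᵢ) h = 0` says that `ωˢ(bᵢ)` and `ω(bᵢ)` have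
the same spatial block. So all of `ωˢ` is forced, and the forced values do define a solution.
-/

lemma eta_comm (x y : V4) : eta x y = eta y x := by
  simp only [eta]; ring

lemma eta_add_right (x y z : V4) : eta x (y + z) = eta x y + eta x z := by
  simp only [eta, Pi.add_apply]; ring

lemma eta_smul_right (x y : V4) (c : ℝ) : eta x (c • y) = c * eta x y := by
  simp only [eta, Pi.smul_apply, smul_eq_mul]; ring

lemma eta_add_left (x y z : V4) : eta (x + y) z = eta x z + eta y z := by
  rw [eta_comm, eta_add_right, eta_comm z, eta_comm z]

lemma eta_smul_left (x y : V4) (c : ℝ) : eta (c • x) y = c * eta x y := by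
  rw [eta_comm, eta_smul_right, eta_comm]

lemma eta_neg_right (x y : V4) : eta x (-y) = -eta x y := by
  simp only [eta, Pi.neg_apply]; ring

lemma eta_neg_left (x y : V4) : eta (-x) y = -eta x y := by
  rw [eta_comm, eta_neg_right, eta_comm]

lemma isLinearMap_eta (a : V4) : IsLinearMap ℝ (eta a) :=
  ⟨eta_add_right a, fun c x => eta_smul_right a x c⟩

lemma isLinearMap_eta_left (y : V4) : IsLinearMap ℝ (eta · y) :=
  ⟨fun x x' => eta_add_left x x' y, fun c x => eta_smul_left x y c⟩

lemma isLin_iff {f : V4 → V4} : IsLin f ↔ IsLinearMap ℝ f :=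
  ⟨fun h => ⟨h.1, h.2⟩, fun h => ⟨h.1, h.2⟩⟩

def lorentzSubmodule : Submodule ℝ (V4 → V4) where
  carrier := {f | IsLin f ∧ IsSkew f}
  zero_mem' := ⟨⟨fun _ _ => by simp, fun _ _ => by simp⟩, fun x y => by simp [eta]⟩
  add_mem' := by
    rintro f g ⟨hf, hf'⟩ ⟨hg, hg'⟩
    refine ⟨⟨fun x y => ?_, fun c x => ?_⟩, fun x y => ?_⟩
    · simp only [Pi.add_apply, hf.1, hg.1]; abel
    · simp only [Pi.add_apply, hf.2, hg.2, smul_add]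
    · rw [Pi.add_apply, Pi.add_apply, eta_add_left, eta_add_right, hf', hg', neg_add]
  smul_mem' := by
    rintro c f ⟨hf, hf'⟩
    refine ⟨⟨fun x y => ?_, fun a x => ?_⟩, fun x y => ?_⟩
    · simp only [Pi.smul_apply, hf.1, smul_add]
    · simp only [Pi.smul_apply, hf.2, smul_comm c a]
    · rw [Pi.smul_apply, Pi.smul_apply, eta_smul_left, eta_smul_right, hf', mul_neg]

lemma connForm_iff {ω : V4 → V4 → V4} :
    ConnForm ω ↔ IsLinearMap ℝ ω ∧ ∀ u, ω u ∈ lorentzSubmodule :=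
  ⟨fun ⟨hadd, hsmul, hlin, hskew⟩ => ⟨⟨hadd, hsmul⟩, fun u => ⟨hlin u, hskew u⟩⟩,
   fun ⟨⟨hadd, hsmul⟩, h⟩ => ⟨hadd, hsmul, fun u => (h u).1, fun u => (h u).2⟩⟩

lemma ConnForm.sub {ω ω' : V4 → V4 → V4} (h : ConnForm ω) (h' : ConnForm ω') :
    ConnForm (ω - ω') := by
  rw [connForm_iff] at *
  exact ⟨(IsLinearMap.mk' _ h.1 - IsLinearMap.mk' _ h'.1).isLinear,
    fun u => lorentzSubmodule.sub_mem (h.2 u) (h'.2 u)⟩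

def wedge (a c : V4) (x : V4) : V4 := eta a x • c - eta c x • a

lemma wedge_mem_lorentzSubmodule (a c : V4) : wedge a c ∈ lorentzSubmodule := by
  refine ⟨⟨fun x y => ?_, fun t x => ?_⟩, fun x y => ?_⟩
  · simp only [wedge, eta_add_right]; module
  · simp only [wedge, eta_smul_right]; module
  · simp only [wedge, eta, Pi.sub_apply, Pi.smul_apply, smul_eq_mul]; ring

lemma isLinearMap_proj (v : V4) : IsLinearMap ℝ (proj v) :=
  ⟨fun x y => by simp only [proj, eta_add_right]; module,
   fun c x => by simp only [proj, eta_smul_right]; module⟩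

section proj

variable {v : V4}

lemma eta_proj_left (x y : V4) : eta (proj v x) y = eta x (proj v y) := by
  simp only [proj, eta_add_left, eta_add_right, eta_smul_left, eta_smul_right, eta_comm v]
  ring

lemma proj_eq_self {x : V4} (hx : eta v x = 0) : proj v x = x := by
  simp [proj, hx]

lemma proj_self (hv : eta v v = -1) : proj v v = 0 := by
  simp [proj, hv]

lemma eta_proj (hv : eta v v = -1) (x : V4) : eta v (proj v x) = 0 := by
  simp only [proj, eta_add_right, eta_smul_right, hv]; ring

lemma proj_proj (hv : eta v v = -1) (x : V4) : proj v (proj v x) = proj v x :=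
  proj_eq_self (eta_proj hv x)

end proj

def conjProj (v : V4) (f : V4 → V4) (x : V4) : V4 := proj v (f (proj v x))

lemma conjProj_mem_lorentzSubmodule (v : V4) {f : V4 → V4} (hf : f ∈ lorentzSubmodule) :
    conjProj v f ∈ lorentzSubmodule := by
  obtain ⟨hlin, hskew⟩ := hf
  have hp := isLinearMap_proj v
  refine ⟨⟨fun x y => ?_, fun c x => ?_⟩, fun x y => ?_⟩
  · simp only [conjProj, hp.map_add, hlin.1]
  · simp only [conjProj, hp.map_smul, hlin.2]
  · rw [conjProj, conjProj, eta_proj_left, hskew, eta_proj_left]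

def frameConstr {M : Type*} [AddCommGroup M] [Module ℝ M] (v : V4) (b : Fin 3 → V4)
    (m₀ : M) (m : Fin 3 → M) (x : V4) : M :=
  -eta v x • m₀ + ∑ i, eta (b i) x • m i

section frameConstr

variable {M : Type*} [AddCommGroup M] [Module ℝ M] {v : V4} {b : Fin 3 → V4}

lemma isLinearMap_frameConstr (m₀ : M) (m : Fin 3 → M) :
    IsLinearMap ℝ (frameConstr v b m₀ m) := by
  refine ⟨fun x y => ?_, fun c x => ?_⟩
  · simp only [frameConstr, eta_add_right, add_smul, Finset.sum_add_distrib, neg_add]; abel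
  · simp only [frameConstr, eta_smul_right, mul_smul, Finset.smul_sum, smul_add, smul_neg,
      neg_smul]

lemma frameConstr_apply (m₀ : V4 → V4) (m : Fin 3 → V4 → V4) (u x : V4) :
    frameConstr v b m₀ m u x = frameConstr v b (m₀ x) (fun i => m i x) u := by
  simp [frameConstr, Finset.sum_apply]

lemma frameConstr_mem {S : Submodule ℝ M} {m₀ : M} {m : Fin 3 → M} (h₀ : m₀ ∈ S)
    (h : ∀ i, m i ∈ S) (x : V4) : frameConstr v b m₀ m x ∈ S :=
  S.add_mem (S.smul_mem _ h₀) (S.sum_mem fun i _ => S.smul_mem _ (h i))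

end frameConstr

structure IsOrthonormalFrame (v : V4) (b : Fin 3 → V4) : Prop where
  eta_v_v : eta v v = -1
  eta_b_b : ∀ i j, eta (b i) (b j) = if i = j then 1 else 0
  eta_v_b : ∀ i, eta v (b i) = 0

namespace IsOrthonormalFrame

variable {v : V4} {b : Fin 3 → V4}

open Matrix in
lemma expand (hF : IsOrthonormalFrame v b) (x : V4) :
    x = -eta v x • v + ∑ i, eta (b i) x • b i := by
  -- With `E` the matrix of the frame and `G = diag(-1,1,1,1)`, orthonormality reads `E G Eᵀ = G`;
  -- hence `(E G)⁻¹ = Eᵀ G`, and `x = Eᵀ G (E G x)` is the claimed expansion.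
  let e : Fin 4 → V4 := vecCons v b
  let G : Matrix (Fin 4) (Fin 4) ℝ := diagonal (vecCons (-1) 1)
  let E : Matrix (Fin 4) (Fin 4) ℝ := of e
  have heta : ∀ i, ((E * G) *ᵥ x) i = eta (e i) x := fun i => by
    simp [G, E, eta, mulVec, dotProduct, Matrix.mul_apply, Fin.sum_univ_four, diagonal]
  have hgram : E * G * Eᵀ = G := by
    have h : ∀ i j, (E * G * Eᵀ) i j = eta (e i) (e j) := fun i j => by
      simp [G, E, eta, Matrix.mul_apply, Fin.sum_univ_four, diagonal]
    ext i j
    rw [h]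
    induction i using Fin.cases <;> induction j using Fin.cases <;>
      simp [e, G, diagonal_apply, hF.eta_v_v, hF.eta_v_b, hF.eta_b_b, eta_comm _ v,
        (Fin.succ_ne_zero _).symm]
  have hinv : Eᵀ * G * (E * G) = 1 := by
    rw [mul_eq_one_comm, ← Matrix.mul_assoc, hgram]
    ext i j; fin_cases i <;> fin_cases j <;> simp [G]
  calc x = (Eᵀ * G * (E * G)) *ᵥ x := by rw [hinv, one_mulVec]
    _ = -eta v x • v + ∑ i, eta (b i) x • b i := by
      rw [← mulVec_mulVec, ← mulVec_mulVec _ Eᵀ G, mulVec_transpose, vecMul_eq_sum,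
        Fin.sum_univ_succ]
      simp only [G, mulVec_diagonal, heta]
      simp [e]; rfl

variable {M : Type*} [AddCommGroup M] [Module ℝ M]

lemma frameConstr_v (hF : IsOrthonormalFrame v b) (m₀ : M) (m : Fin 3 → M) :
    frameConstr v b m₀ m v = m₀ := by
  simp [frameConstr, hF.eta_v_v, eta_comm _ v, hF.eta_v_b]

lemma frameConstr_b (hF : IsOrthonormalFrame v b) (m₀ : M) (m : Fin 3 → M) (i : Fin 3) :
    frameConstr v b m₀ m (b i) = m i := by
  simp [frameConstr, hF.eta_v_b, hF.eta_b_b]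

lemma frameConstr_eq (hF : IsOrthonormalFrame v b) {f : V4 → M} (hf : IsLinearMap ℝ f) :
    frameConstr v b (f v) (fun i => f (b i)) = f := by
  funext x
  have := congrArg (IsLinearMap.mk' f hf) (hF.expand x)
  simp only [map_add, map_sum, map_smul, IsLinearMap.mk'_apply] at this
  exact this.symm

lemma eq_zero_of_frame (hF : IsOrthonormalFrame v b) {f : V4 → M} (hf : IsLinearMap ℝ f)
    (hv : f v = 0) (hb : ∀ i, f (b i) = 0) : f = 0 := by
  rw [← hF.frameConstr_eq hf, hv]
  funext x
  simp [frameConstr, hb]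

lemma bilin_eq_zero (hF : IsOrthonormalFrame v b) {β : V4 → V4 → ℝ}
    (hl : ∀ y, IsLinearMap ℝ (β · y)) (hr : ∀ x, IsLinearMap ℝ (β x))
    (hvv : β v v = 0) (hvb : ∀ i, β v (b i) = 0) (hbv : ∀ i, β (b i) v = 0)
    (hbb : ∀ i j, β (b i) (b j) = 0) : β = 0 := by
  funext x y
  have hy : (β · y) = 0 := hF.eq_zero_of_frame (hl y)
    (congrFun (hF.eq_zero_of_frame (hr v) hvv hvb) y)
    fun i => congrFun (hF.eq_zero_of_frame (hr (b i)) (hbv i) (hbb i)) y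
  exact congrFun hy x

lemma mem_lorentzSubmodule (hF : IsOrthonormalFrame v b) {f : V4 → V4} (hf : IsLinearMap ℝ f)
    (hvv : eta (f v) v = 0) (hvb : ∀ i, eta (f v) (b i) = -eta v (f (b i)))
    (hbb : ∀ i j, eta (f (b i)) (b j) = -eta (b i) (f (b j))) : f ∈ lorentzSubmodule := by
  let L := IsLinearMap.mk' f hf
  have h := hF.bilin_eq_zero (β := fun x y => eta (f x) y + eta x (f y))
    (fun y => ((IsLinearMap.mk' _ (isLinearMap_eta_left y)).comp L +
      IsLinearMap.mk' _ (isLinearMap_eta_left (f y))).isLinear)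
    (fun x => (IsLinearMap.mk' _ (isLinearMap_eta (f x)) +
      (IsLinearMap.mk' _ (isLinearMap_eta x)).comp L).isLinear)
    (by rw [hvv, eta_comm, hvv, add_zero])
    (fun i => by rw [hvb, neg_add_cancel])
    (fun i => by rw [eta_comm, ← neg_eq_iff_add_eq_zero, ← hvb, eta_comm])
    (fun i j => by rw [hbb, neg_add_cancel])
  exact ⟨isLin_iff.2 hf, fun x y => eq_neg_of_add_eq_zero_left (congrFun (congrFun h x) y)⟩

end IsOrthonormalFrame

def semiTeleparallelPart (v : V4) (dv : V4 → V4) (b : Fin 3 → V4) (db : Fin 3 → V4 → V4)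
    (ω : V4 → V4 → V4) : V4 → V4 → V4 :=
  frameConstr v b (frameConstr v b (-dv v) fun i => -db i v)
    fun i => conjProj v (ω (b i)) + wedge v (dv (b i))

section semiTeleparallelPart

variable {v : V4} {dv : V4 → V4} {b : Fin 3 → V4} {db : Fin 3 → V4 → V4} {ω : V4 → V4 → V4}

lemma connForm_semiTeleparallelPart (hF : IsOrthonormalFrame v b)
    (hdvorth : ∀ u, eta v (dv u) = 0)
    (hcompat1 : ∀ i u, eta v (db i u) + eta (b i) (dv u) = 0)
    (hcompat2 : ∀ i j u, eta (b i) (db j u) + eta (b j) (db i u) = 0) (hω : ConnForm ω) :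
    ConnForm (semiTeleparallelPart v dv b db ω) := by
  refine connForm_iff.2 ⟨isLinearMap_frameConstr _ _, frameConstr_mem ?_ fun i => ?_⟩
  · refine hF.mem_lorentzSubmodule (isLinearMap_frameConstr _ _) ?_ (fun i => ?_)
      (fun i j => ?_) <;> simp only [hF.frameConstr_v, hF.frameConstr_b]
    · rw [eta_neg_left, eta_comm, hdvorth, neg_zero]
    · rw [eta_neg_left, eta_neg_right, neg_neg, eta_comm]
      linarith [hcompat1 i v]
    · rw [eta_neg_left, eta_neg_right, neg_neg, eta_comm]
      linarith [hcompat2 i j v]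
  · exact lorentzSubmodule.add_mem (conjProj_mem_lorentzSubmodule v ((connForm_iff.1 hω).2 _))
      (wedge_mem_lorentzSubmodule _ _)

lemma semiTeleparallelPart_b (hF : IsOrthonormalFrame v b) (i : Fin 3) :
    semiTeleparallelPart v dv b db ω (b i) = conjProj v (ω (b i)) + wedge v (dv (b i)) :=
  hF.frameConstr_b _ _ i

lemma semiTeleparallel_semiTeleparallelPart (hF : IsOrthonormalFrame v b) (hdvlin : IsLin dv)
    (hdvorth : ∀ u, eta v (dv u) = 0) (hω : ConnForm ω) :
    SemiTeleparallel v dv b db (semiTeleparallelPart v dv b db ω) := by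
  refine ⟨fun u => ?_, fun i => by simp [semiTeleparallelPart, hF.frameConstr_v, hF.frameConstr_b]⟩
  have hω0 (u : V4) : ω u 0 = 0 := (isLin_iff.1 (hω.2.2.1 u)).map_zero
  have hv (i : Fin 3) : (conjProj v (ω (b i)) + wedge v (dv (b i))) v = -dv (b i) := by
    simp [conjProj, wedge, proj_self hF.eta_v_v, hω0, (isLinearMap_proj v).map_zero, hF.eta_v_v,
      eta_comm _ v, hdvorth]
  have hdv := congrFun (hF.frameConstr_eq (-IsLinearMap.mk' dv (isLin_iff.1 hdvlin)).isLinear) u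
  simp only [LinearMap.neg_apply, IsLinearMap.mk'_apply] at hdv
  rw [semiTeleparallelPart, frameConstr_apply, hF.frameConstr_v]
  simp only [hv]
  rw [hdv, add_neg_cancel]

lemma conjProj_sub_semiTeleparallelPart (hF : IsOrthonormalFrame v b) (i : Fin 3) :
    conjProj v ((ω - semiTeleparallelPart v dv b db ω) (b i)) = 0 := by
  funext x
  have hp := isLinearMap_proj v
  simp only [conjProj, Pi.sub_apply, semiTeleparallelPart_b hF, Pi.add_apply, wedge,
    eta_proj hF.eta_v_v, zero_smul, zero_sub, hp.map_sub, hp.map_add, hp.map_neg, hp.map_smul,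
    proj_proj hF.eta_v_v, proj_self hF.eta_v_v]
  simp

end semiTeleparallelPart

lemma goodPairS_semiTeleparallelPart {v : V4} {dv : V4 → V4} {b : Fin 3 → V4}
    {db : Fin 3 → V4 → V4} {ω : V4 → V4 → V4} (hF : IsOrthonormalFrame v b) (hdvlin : IsLin dv)
    (hdvorth : ∀ u, eta v (dv u) = 0)
    (hcompat1 : ∀ i u, eta v (db i u) + eta (b i) (dv u) = 0)
    (hcompat2 : ∀ i j u, eta (b i) (db j u) + eta (b j) (db i u) = 0) (hω : ConnForm ω) :
    GoodPairS v dv b db ω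
      (semiTeleparallelPart v dv b db ω, ω - semiTeleparallelPart v dv b db ω) := by
  have hs := connForm_semiTeleparallelPart hF hdvorth hcompat1 hcompat2 hω
  obtain ⟨hadd, hsmul, hlin, hskew⟩ := hω.sub hs
  exact ⟨hs, semiTeleparallel_semiTeleparallelPart hF hdvlin hdvorth hω, hadd, hsmul, hlin, hskew,
    fun i => congrFun (conjProj_sub_semiTeleparallelPart hF i), fun u x => by simp⟩

lemma ConnForm.eq_zero_of_frame {v : V4} {b : Fin 3 → V4} (hF : IsOrthonormalFrame v b)
    {D : V4 → V4 → V4} (hD : ConnForm D) (hv : ∀ u, D u v = 0) (hb : ∀ i, D v (b i) = 0)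
    (hspace : ∀ i, conjProj v (D (b i)) = 0) : D = 0 := by
  obtain ⟨hDlin, hDmem⟩ := connForm_iff.1 hD
  have hlin (u : V4) : IsLinearMap ℝ (D u) := isLin_iff.1 (hDmem u).1
  refine hF.eq_zero_of_frame hDlin (hF.eq_zero_of_frame (hlin v) (hv v) hb) fun i => ?_
  refine hF.eq_zero_of_frame (hlin (b i)) (hv (b i)) fun j => ?_
  have htime : eta v (D (b i) (b j)) = 0 := by
    rw [← neg_eq_zero, ← (hDmem (b i)).2, hv]
    simp [eta]
  calc D (b i) (b j) = proj v (D (b i) (proj v (b j))) := by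
        rw [proj_eq_self (hF.eta_v_b j), proj_eq_self htime]
    _ = 0 := congrFun (hspace i) (b j)

lemma GoodPairS.unique {v : V4} {dv : V4 → V4} {b : Fin 3 → V4} {db : Fin 3 → V4 → V4}
    {ω : V4 → V4 → V4} {p p' : (V4 → V4 → V4) × (V4 → V4 → V4)} (hF : IsOrthonormalFrame v b)
    (h : GoodPairS v dv b db ω p) (h' : GoodPairS v dv b db ω p') : p = p' := by
  obtain ⟨hc, ⟨hst, hst'⟩, -, -, -, -, hS, hdec⟩ := h
  obtain ⟨hc₁, ⟨hst₁, hst₁'⟩, -, -, -, -, hS₁, hdec₁⟩ := h'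
  have hdiff (u x : V4) : (p.1 - p'.1) u x = p'.2 u x - p.2 u x := by
    rw [Pi.sub_apply, Pi.sub_apply, sub_eq_sub_iff_add_eq_add, ← hdec, add_comm, ← hdec₁]
  have hfst : p.1 = p'.1 := sub_eq_zero.1 <| ConnForm.eq_zero_of_frame hF (hc.sub hc₁)
    (fun u => by
      simp only [Pi.sub_apply]; linear_combination (norm := module) hst u - hst₁ u)
    (fun i => by
      simp only [Pi.sub_apply]; linear_combination (norm := module) hst' i - hst₁' i)
    (fun i => funext fun x => by
      rw [conjProj, hdiff, (isLinearMap_proj v).map_sub, hS₁, hS, sub_zero, Pi.zero_apply])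
  refine Prod.ext hfst (funext fun u => funext fun x => ?_)
  have := hdec u x
  rw [hdec₁, hfst] at this
  exact (add_left_cancel this).symm

theorem statement5_general (v : V4) (hv : eta v v = -1)
    (dv : V4 → V4) (hdvlin : IsLin dv) (hdvorth : ∀ u, eta v (dv u) = 0)
    (b : Fin 3 → V4) (hb : ∀ i j, eta (b i) (b j) = if i = j then 1 else 0)
    (hvb : ∀ i, eta v (b i) = 0)
    (db : Fin 3 → V4 → V4)
    (hcompat1 : ∀ i u, eta v (db i u) + eta (b i) (dv u) = 0)
    (hcompat2 : ∀ i j u, eta (b i) (db j u) + eta (b j) (db i u) = 0)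
    (ω : V4 → V4 → V4) (hω : ConnForm ω) :
    ∃! p : (V4 → V4 → V4) × (V4 → V4 → V4), GoodPairS v dv b db ω p := by
  have hF : IsOrthonormalFrame v b := ⟨hv, hb, hvb⟩
  have h := goodPairS_semiTeleparallelPart hF hdvlin hdvorth hcompat1 hcompat2 hω
  exact ⟨_, h, fun p hp => hp.unique hF h⟩

/-- Every connection form `ω` decomposes uniquely as `ω = ωˢ + S` with
`ωˢ` semi-teleparallel w.r.t. `{v, b₁, b₂, b₃}` and `S` a 1-form with η-skew values whose
spatial part in the triad directions vanishes: `h ∘ S(bᵢ) ∘ h = 0` for `i = 1,2,3`. -/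
theorem statement5 (v : V4) (hv : eta v v = -1)
    (dv : V4 → V4) (hdvlin : IsLin dv) (hdvorth : ∀ u, eta v (dv u) = 0)
    (b : Fin 3 → V4) (hb : ∀ i j, eta (b i) (b j) = if i = j then 1 else 0)
    (hvb : ∀ i, eta v (b i) = 0)
    (db : Fin 3 → V4 → V4) (hdblin : ∀ i, IsLin (db i))
    (hcompat1 : ∀ i u, eta v (db i u) + eta (b i) (dv u) = 0)
    (hcompat2 : ∀ i j u, eta (b i) (db j u) + eta (b j) (db i u) = 0)
    (ω : V4 → V4 → V4) (hω : ConnForm ω) :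
    ∃! p : (V4 → V4 → V4) × (V4 → V4 → V4), GoodPairS v dv b db ω p :=
  statement5_general v hv dv hdvlin hdvorth b hb hvb db hcompat1 hcompat2 ω hω
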